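/- arXiv:1012.5285 — 7 statements merged into one kernel-verified Lean document; each statement's English description precedes it below -/
import Mathlib

section
/- Let N be a group with a separating filter base 𝒰 of normal subgroups, endowed with the subgroup topology, and let N̄ be its Hausdorff completion. Then N̄ is locally compact if and only if there exists U ∈ 𝒰 such that |U/V| < ∞ for all V ∈ 𝒰 with V ⊆ U. -/
/-!
In `N̄`, the kernel of the projection to `N ⧸ U i` is an open subgroup. Every element `y` of it
has `y j ∈ (U i U j) / U j` for all `j`, since `y` agrees at `i` and `j` with some point of `N`.
Hence by Tychonoff it is compact when all these images are finite, which by directedness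
follows from finiteness of `|U i / U k|` for `U k ≤ U i`. Conversely, a compact neighbourhood of
`1` contains the image of some `U i`, and its projection to the discrete `N ⧸ U j` is finite.
-/

instance quotDiscrete {N : Type*} [Group N] (U : Subgroup N) :
    TopologicalSpace (N ⧸ U) := ⊥

open Topology

section Quotients

variable {G : Type*} [Group G]

theorem Subgroup.finite_quotient_subgroupOf_iff (H K : Subgroup G) :
    Finite (H ⧸ K.subgroupOf H) ↔ ((QuotientGroup.mk : G → G ⧸ K) '' H).Finite := by
  let f : H ⧸ K.subgroupOf H → G ⧸ K :=
    Quotient.map' Subtype.val fun a b h => by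
      simpa only [QuotientGroup.leftRel_apply, Subgroup.mem_subgroupOf, Subgroup.coe_mul,
        Subgroup.coe_inv] using h
  have hf : Function.Injective f := by
    refine Quotient.ind₂' fun a b h => Quotient.sound' ?_
    simpa only [QuotientGroup.leftRel_apply, Subgroup.mem_subgroupOf, Subgroup.coe_mul,
        Subgroup.coe_inv] using Quotient.exact' h
  have hrange : Set.range f = QuotientGroup.mk '' H := by
    ext q
    constructor
    · rintro ⟨q, rfl⟩
      induction q using QuotientGroup.induction_on with
      | H h => exact ⟨h, h.2, rfl⟩
    · rintro ⟨g, hg, rfl⟩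
      exact ⟨QuotientGroup.mk ⟨g, hg⟩, rfl⟩
  rw [← hrange, ← Set.finite_coe_iff, (Equiv.ofInjective f hf).finite_iff.symm]

theorem Set.Finite.image_mk_of_le {s : Set G} {K L : Subgroup G} (hKL : K ≤ L)
    (hs : ((QuotientGroup.mk : G → G ⧸ K) '' s).Finite) :
    ((QuotientGroup.mk : G → G ⧸ L) '' s).Finite := by
  simpa only [Set.image_image, Subgroup.quotientMapOfLE_apply_mk] using
    hs.image (Subgroup.quotientMapOfLE hKL)

end Quotients

namespace SubgroupFilterBase

variable {N ι : Type*} [Group N]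

instance (V : Subgroup N) : DiscreteTopology (N ⧸ V) := ⟨rfl⟩

instance (V : Subgroup N) [V.Normal] : IsTopologicalGroup (N ⧸ V) where
  continuous_mul := continuous_of_discreteTopology
  continuous_inv := continuous_of_discreteTopology

variable (U : ι → Subgroup N) [∀ i, (U i).Normal]

def toPi : N →* ∀ i, N ⧸ U i := MonoidHom.pi fun i => QuotientGroup.mk' (U i)

/-- The completion `N̄`, realised as the closure of the diagonal image of `N` in
`∀ i, N ⧸ U i`. -/
def completion : Subgroup (∀ i, N ⧸ U i) := (toPi U).range.topologicalClosure

theorem toPi_mem_completion (n : N) : toPi U n ∈ completion U :=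
  (toPi U).range.le_topologicalClosure ⟨n, rfl⟩

variable {U}

theorem exists_image_toPi_subset_of_mem_nhds_one [Nonempty ι] (hdir : Directed (· ≥ ·) U)
    {s : Set (∀ i, N ⧸ U i)} (hs : s ∈ 𝓝 1) : ∃ i, toPi U '' U i ⊆ s := by
  rw [nhds_pi, Filter.mem_pi'] at hs
  obtain ⟨I, t, ht, hts⟩ := hs
  obtain ⟨i, hi⟩ := hdir.finset_le I
  refine ⟨i, ?_⟩
  rintro _ ⟨n, hn, rfl⟩
  refine hts fun j hj => ?_
  have hnj : toPi U n j = 1 := (QuotientGroup.eq_one_iff n).2 (hi j hj hn)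
  rw [hnj]
  exact mem_of_mem_nhds (ht j)

theorem finite_image_mk_of_locallyCompactSpace [Nonempty ι] (hdir : Directed (· ≥ ·) U)
    [LocallyCompactSpace (completion U)] :
    ∃ i, ∀ j, ((QuotientGroup.mk : N → N ⧸ U j) '' U i).Finite := by
  obtain ⟨K, hK, hKmem⟩ := exists_compact_mem_nhds (1 : completion U)
  rw [nhds_subtype, Filter.mem_comap] at hKmem
  obtain ⟨s, hs, hsK⟩ := hKmem
  obtain ⟨i, hi⟩ := exists_image_toPi_subset_of_mem_nhds_one hdir hs
  refine ⟨i, fun j => ?_⟩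
  refine (hK.image ((continuous_apply j).comp continuous_subtype_val)).finite_of_discrete.subset ?_
  rintro _ ⟨n, hn, rfl⟩
  exact ⟨⟨toPi U n, toPi_mem_completion U n⟩, hsK (hi ⟨n, hn, rfl⟩), rfl⟩

theorem mem_image_mk_of_mem_completion {y : ∀ i, N ⧸ U i} (hy : y ∈ completion U) {i : ι}
    (hyi : y i = 1) (j : ι) : y j ∈ QuotientGroup.mk '' (U i : Set N) := by
  have hopen :
      IsOpen ((fun z : ∀ i, N ⧸ U i => z i) ⁻¹' {y i} ∩ (fun z => z j) ⁻¹' {y j}) :=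
    ((isOpen_discrete _).preimage (continuous_apply i)).inter
      ((isOpen_discrete _).preimage (continuous_apply j))
  obtain ⟨_, ⟨hni : _ = y i, hnj : _ = y j⟩, n, rfl⟩ :=
    _root_.mem_closure_iff.1 hy _ hopen ⟨rfl, rfl⟩
  exact ⟨n, (QuotientGroup.eq_one_iff n).1 (hni.trans hyi), hnj⟩

theorem locallyCompactSpace_completion {i : ι}
    (hi : ∀ j, ((QuotientGroup.mk : N → N ⧸ U j) '' U i).Finite) :
    LocallyCompactSpace (completion U) := by
  let K : Set (completion U) := {x | (x : ∀ i, N ⧸ U i) i = 1}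
  have hKopen : IsOpen K :=
    (isOpen_discrete {1}).preimage ((continuous_apply i).comp continuous_subtype_val)
  let S : Set (∀ j, N ⧸ U j) :=
    {y | y i = 1} ∩ Set.univ.pi fun j => QuotientGroup.mk '' (U i : Set N)
  have hS : IsCompact S :=
    (isCompact_univ_pi fun j => (hi j).isCompact).inter_left
      ((isClosed_discrete {1}).preimage (continuous_apply i))
  have hKS : K = Subtype.val ⁻¹' S := by
    ext x
    exact ⟨fun hx => ⟨hx, fun j _ => mem_image_mk_of_mem_completion x.2 hx j⟩, And.left⟩
  have hK : IsCompact K := hKS ▸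
    (toPi U).range.isClosed_topologicalClosure.isClosedEmbedding_subtypeVal.isCompact_preimage hS
  exact hK.locallyCompactSpace_of_mem_nhds_of_group (hKopen.mem_nhds (x := 1) rfl)

end SubgroupFilterBase

open SubgroupFilterBase in
theorem stmt_3_general {N ι : Type*} [Group N] [Nonempty ι] (U : ι → Subgroup N)
    [∀ i, (U i).Normal]
    (hdir : ∀ i j : ι, ∃ k, U k ≤ U i ⊓ U j) :
    let φ : N →* (∀ i, N ⧸ U i) := Pi.monoidHom fun i => QuotientGroup.mk' (U i)
    (LocallyCompactSpace ↥(closure (Set.range φ)) ↔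
      ∃ i, ∀ j, U j ≤ U i → Finite (↥(U i) ⧸ (U j).subgroupOf (U i))) := by
  intro φ
  change LocallyCompactSpace (completion U) ↔ _
  simp only [Subgroup.finite_quotient_subgroupOf_iff]
  constructor
  · intro _
    have hdir' : Directed (· ≥ ·) U := fun i j =>
      (hdir i j).imp fun k hk => ⟨hk.trans inf_le_left, hk.trans inf_le_right⟩
    obtain ⟨i, hi⟩ := finite_image_mk_of_locallyCompactSpace hdir'
    exact ⟨i, fun j _ => hi j⟩
  · rintro ⟨i, hi⟩
    refine locallyCompactSpace_completion (i := i) fun j => ?_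
    obtain ⟨k, hk⟩ := hdir i j
    exact (hi k (hk.trans inf_le_left)).image_mk_of_le (hk.trans inf_le_right)

/-- The completion `N̄` (the closure of the image of `N` in `∏ i, N ⧸ U i`) is
locally compact iff some `U i` has finite quotients by all smaller members of
the filter base. -/
theorem stmt_3 {N ι : Type*} [Group N] [Nonempty ι] (U : ι → Subgroup N)
    [∀ i, (U i).Normal]
    (hdir : ∀ i j : ι, ∃ k, U k ≤ U i ⊓ U j)
    (hsep : (⨅ i, U i) = ⊥) :
    let φ : N →* (∀ i, N ⧸ U i) := Pi.monoidHom fun i => QuotientGroup.mk' (U i)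
    (LocallyCompactSpace ↥(closure (Set.range φ)) ↔
      ∃ i, ∀ j, U j ≤ U i → Finite (↥(U i) ⧸ (U j).subgroupOf (U i))) :=
  stmt_3_general U hdir
end

section
/- Let G = N ⋊ H be a semidirect product and M a nontrivial normal subgroup of N such that 𝒰 = {aMa⁻¹ : a ∈ H} is a separating filter base of normal subgroups of N with finite quotients. Then M is a Hecke subgroup of G: for every g ∈ G, the index |M : M ∩ gMg⁻¹| is finite. -/
/-- If `𝒰 = {aMa⁻¹ : a ∈ H}` is a separating filter base of normal subgroups of
`N` with finite quotients, then `M` is a Hecke subgroup of `G = N ⋊ H`: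
every `|M : M ∩ gMg⁻¹|` is finite. -/
theorem stmt_5 {N H : Type*} [Group N] [Group H] (φ : H →* MulAut N)
    (M : Subgroup N) (hM : M ≠ ⊥)
    (hnormal : ∀ a : H, (M.map (φ a).toMonoidHom).Normal)
    (hbase : ∀ a b : H, ∃ c : H,
      M.map (φ c).toMonoidHom ≤ M.map (φ a).toMonoidHom ⊓ M.map (φ b).toMonoidHom)
    (hsep : (⨅ a : H, M.map (φ a).toMonoidHom) = ⊥)
    (hfin : ∀ a b : H, M.map (φ b).toMonoidHom ≤ M.map (φ a).toMonoidHom →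
      Finite (↥(M.map (φ a).toMonoidHom) ⧸
        (M.map (φ b).toMonoidHom).subgroupOf (M.map (φ a).toMonoidHom))) :
    ∀ g : N ⋊[φ] H,
      Finite (↥(M.map (SemidirectProduct.inl : N →* N ⋊[φ] H)) ⧸
        ((M.map (SemidirectProduct.inl : N →* N ⋊[φ] H)).map
            (MulAut.conj g).toMonoidHom).subgroupOf
          (M.map (SemidirectProduct.inl : N →* N ⋊[φ] H))) := by
  intro g
  obtain ⟨c, hc⟩ := hbase g.right 1
  have hφ1 : M.map ((φ 1).toMonoidHom) = M := by
    have h1 : ((φ 1).toMonoidHom) = MonoidHom.id N := by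
      rw [map_one]; rfl
    rw [h1, Subgroup.map_id]
  rw [hφ1] at hc
  have hcM : M.map (φ c).toMonoidHom ≤ M := le_trans hc inf_le_right
  have hca : M.map (φ c).toMonoidHom ≤ M.map (φ g.right).toMonoidHom :=
    le_trans hc inf_le_left
  have hfinc := hfin 1 c (by rw [hφ1]; exact hcM)
  rw [hφ1] at hfinc
  set A := M.map (SemidirectProduct.inl : N →* N ⋊[φ] H) with hA
  set B := A.map (MulAut.conj g).toMonoidHom with hB
  have key : ∀ x : N, x ∈ M.map (φ g.right).toMonoidHom →
      (SemidirectProduct.inl x : N ⋊[φ] H) ∈ B := by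
    intro x hx
    have hx' : g.left⁻¹ * x * g.left ∈ M.map (φ g.right).toMonoidHom := by
      have := (hnormal g.right).conj_mem x hx g.left⁻¹
      simpa using this
    obtain ⟨m, hm, hmx⟩ := hx'
    refine ⟨SemidirectProduct.inl m, Subgroup.mem_map_of_mem _ hm, ?_⟩
    have : g * SemidirectProduct.inl m * g⁻¹ = SemidirectProduct.inl x := by
      ext
      · simp only [SemidirectProduct.mul_left, SemidirectProduct.inv_left,
          SemidirectProduct.mul_right, SemidirectProduct.inv_right,
          SemidirectProduct.left_inl, SemidirectProduct.right_inl, mul_one,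
          map_inv, map_mul, map_one, MulEquiv.coe_toMonoidHom] at hmx ⊢
        rw [hmx]
        simp only [MulAut.apply_inv_self]
        group
      · simp
    simpa [MulAut.conj] using this
  refine Finite.of_surjective
    (Quotient.map' (fun (m : ↥M) => (⟨SemidirectProduct.inl m,
        Subgroup.mem_map_of_mem _ m.2⟩ : ↥A)) ?_ :
      ↥M ⧸ (M.map (φ c).toMonoidHom).subgroupOf M → ↥A ⧸ B.subgroupOf A) ?_
  · intro x y h
    rw [QuotientGroup.leftRel_apply] at h ⊢
    have hxy : ((x⁻¹ * y : ↥M) : N) ∈ M.map (φ c).toMonoidHom := h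
    have : (SemidirectProduct.inl ((x⁻¹ * y : ↥M) : N) : N ⋊[φ] H) ∈ B :=
      key _ (hca hxy)
    simpa [Subgroup.mem_subgroupOf, map_mul, map_inv] using this
  · intro t
    refine Quotient.inductionOn' t ?_
    intro a
    obtain ⟨m, hm, hma⟩ := a.2
    refine ⟨Quotient.mk'' ⟨m, hm⟩, ?_⟩
    simp only [Quotient.map'_mk'']
    congr 1
    exact Subtype.ext hma
end

section
/- Assume G = N ⋊ H with M ⊴ N, M ≠ {e}, 𝒰 = {aMa⁻¹ : a ∈ H} a separating filter base with finite quotients. Then for every b ∈ H there exists a ∈ H such that aUa⁻¹ ⊊ U, where U = bMb⁻¹. Consequently, for every y ∈ N and U ∈ 𝒰 there exists g ∈ G with β_g(yU) ⊊ yU. -/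
open Pointwise

/-- The `ax+b` map: for `g = xa ∈ N ⋊ H` and `y ∈ N`, `β_g(y) = x·(a y a⁻¹)`. -/
def axb {N H : Type*} [Group N] [Group H] (φ : H →* MulAut N)
    (g : N ⋊[φ] H) (y : N) : N :=
  g.left * φ g.right y

lemma map_map_aux {N H : Type*} [Group N] [Group H] (φ : H →* MulAut N)
    (M : Subgroup N) (a b : H) :
    (M.map (φ b).toMonoidHom).map (φ a).toMonoidHom = M.map (φ (a * b)).toMonoidHom := by
  rw [Subgroup.map_map]
  congr 1
  ext x
  simp [map_mul]

/-- If `M ≠ {e}` and `𝒰 = {aMa⁻¹ : a ∈ H}` is a separating filter base with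
finite quotients, then every `U = bMb⁻¹ ∈ 𝒰` has a proper conjugate
`aUa⁻¹ ⊊ U`, and consequently every coset `yU` admits `g ∈ G` with
`β_g(yU) ⊊ yU`. -/
theorem stmt_9 {N H : Type*} [Group N] [Group H] (φ : H →* MulAut N)
    (M : Subgroup N) (hM : M ≠ ⊥)
    (hnormal : ∀ a : H, (M.map (φ a).toMonoidHom).Normal)
    (hbase : ∀ a b : H, ∃ c : H,
      M.map (φ c).toMonoidHom ≤ M.map (φ a).toMonoidHom ⊓ M.map (φ b).toMonoidHom)
    (hsep : (⨅ a : H, M.map (φ a).toMonoidHom) = ⊥)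
    (hfin : ∀ a b : H, M.map (φ b).toMonoidHom ≤ M.map (φ a).toMonoidHom →
      Finite (↥(M.map (φ a).toMonoidHom) ⧸
        (M.map (φ b).toMonoidHom).subgroupOf (M.map (φ a).toMonoidHom))) :
    (∀ b : H, ∃ a : H,
      (M.map (φ b).toMonoidHom).map (φ a).toMonoidHom < M.map (φ b).toMonoidHom) ∧
      (∀ (y : N) (b : H), ∃ g : N ⋊[φ] H,
        axb φ g '' (y • ((M.map (φ b).toMonoidHom : Subgroup N) : Set N)) ⊂
          y • ((M.map (φ b).toMonoidHom : Subgroup N) : Set N)) := by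
  have key : ∀ b : H, ∃ a : H,
      (M.map (φ b).toMonoidHom).map (φ a).toMonoidHom < M.map (φ b).toMonoidHom := by
    intro b
    obtain ⟨⟨x, hxM⟩, hx1⟩ := (Subgroup.ne_bot_iff_exists_ne_one.mp hM)
    have hx1' : x ≠ 1 := fun h => hx1 (Subtype.ext h)
    set m : N := φ b x with hm
    have hmb : m ∈ M.map (φ b).toMonoidHom := ⟨x, hxM, rfl⟩
    have hm1 : m ≠ 1 := by
      simp only [hm]
      intro h
      exact hx1' ((φ b).injective (by simpa using h))
    -- m not in the infimum
    have : m ∉ (⨅ a : H, M.map (φ a).toMonoidHom) := by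
      rw [hsep]; simpa using hm1
    obtain ⟨d, hd⟩ : ∃ d : H, m ∉ M.map (φ d).toMonoidHom := by
      by_contra h
      push_neg at h
      exact this (Subgroup.mem_iInf.mpr h)
    obtain ⟨c, hc⟩ := hbase b d
    refine ⟨c * b⁻¹, ?_⟩
    rw [map_map_aux, mul_assoc, inv_mul_cancel, mul_one]
    refine lt_of_le_of_ne (hc.trans inf_le_left) ?_
    intro heq
    exact hd ((hc.trans inf_le_right) (heq ▸ hmb))
  refine ⟨key, ?_⟩
  intro y b
  obtain ⟨a, ha⟩ := key b
  refine ⟨⟨y * (φ a y)⁻¹, a⟩, ?_⟩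
  have himg : axb φ (⟨y * (φ a y)⁻¹, a⟩ : N ⋊[φ] H) ''
      (y • ((M.map (φ b).toMonoidHom : Subgroup N) : Set N))
      = y • (((M.map (φ b).toMonoidHom).map (φ a).toMonoidHom : Subgroup N) : Set N) := by
    ext z
    simp only [Set.mem_image, Set.mem_smul_set, Subgroup.mem_map, SetLike.mem_coe]
    constructor
    · rintro ⟨n, ⟨u, hu, rfl⟩, rfl⟩
      exact ⟨φ a u, ⟨u, hu, rfl⟩, by simp [axb, mul_assoc]⟩
    · rintro ⟨w, ⟨u, hu, rfl⟩, rfl⟩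
      exact ⟨y * u, ⟨u, hu, rfl⟩, by simp [axb, mul_assoc]⟩
  rw [himg]
  have hss : (((M.map (φ b).toMonoidHom).map (φ a).toMonoidHom : Subgroup N) : Set N)
      ⊂ ((M.map (φ b).toMonoidHom : Subgroup N) : Set N) :=
    SetLike.lt_iff_le_and_exists.mp ha |>.elim fun hle ⟨w, hw1, hw2⟩ =>
      ⟨hle, fun h => hw2 (h hw1)⟩
  constructor
  · exact Set.smul_set_mono hss.1
  · intro h
    apply hss.2
    intro z hz
    have : y * z ∈ y • (((M.map (φ b).toMonoidHom).map (φ a).toMonoidHom : Subgroup N) : Set N) :=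
      h ⟨z, hz, rfl⟩
    obtain ⟨w, hw, hwz⟩ := this
    have : z = w := by
      have := mul_left_cancel hwz
      exact this.symm
    exact this ▸ hw
end

section
/- Assume H acts effectively on M (for each a ≠ e in H there is s ∈ M with asa⁻¹ ≠ s). If g = xa ∈ G (x ∈ N, a ∈ H) and there is a nonempty open set O ⊆ N (in the subgroup topology determined by 𝒰) fixed pointwise by β_g, then g = e. Equivalently, for g ≠ e the fixed-point set of β_g in N has empty interior. -/
open Pointwise

/-- Every nonempty open set in the subgroup topology contains, around each of its
points, a coset of some `M.map (φ c)`. -/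
lemma key_coset {N H : Type*} [Group N] [Group H] (φ : H →* MulAut N)
    (M : Subgroup N)
    (hbase : ∀ a b : H, ∃ c : H,
      M.map (φ c).toMonoidHom ≤ M.map (φ a).toMonoidHom ⊓ M.map (φ b).toMonoidHom)
    {O : Set N}
    (hO : TopologicalSpace.GenerateOpen
      {s | ∃ (x : N) (a : H),
        s = x • ((M.map (φ a).toMonoidHom : Subgroup N) : Set N)} O) :
    ∀ y ∈ O, ∃ c : H,
      y • ((M.map (φ c).toMonoidHom : Subgroup N) : Set N) ⊆ O := by
  induction hO with
  | basic s hs =>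
      intro y hy
      obtain ⟨x, a, rfl⟩ := hs
      refine ⟨a, ?_⟩
      have : y • ((M.map (φ a).toMonoidHom : Subgroup N) : Set N)
          = x • ((M.map (φ a).toMonoidHom : Subgroup N) : Set N) := by
        rw [leftCoset_eq_iff]
        simpa using (Subgroup.map (φ a).toMonoidHom M).inv_mem ((mem_leftCoset_iff x).1 hy)
      rw [this]
  | univ =>
      intro y _
      exact ⟨1, Set.subset_univ _⟩
  | inter s t _ _ ihs iht =>
      intro y hy
      obtain ⟨c1, h1⟩ := ihs y hy.1
      obtain ⟨c2, h2⟩ := iht y hy.2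
      obtain ⟨c, hc⟩ := hbase c1 c2
      refine ⟨c, fun z hz => ?_⟩
      obtain ⟨m, hm, rfl⟩ := hz
      exact ⟨h1 ⟨m, (hc hm).1, rfl⟩, h2 ⟨m, (hc hm).2, rfl⟩⟩
  | sUnion S _ ih =>
      intro y hy
      obtain ⟨s, hs, hys⟩ := hy
      obtain ⟨c, hc⟩ := ih s hs y hys
      exact ⟨c, hc.trans (Set.subset_sUnion_of_mem hs)⟩

/-- If `H` acts effectively on `M`, then the `ax+b` action of `G = N ⋊ H` on `N`
is topologically free for the subgroup topology determined by
`𝒰 = {aMa⁻¹ : a ∈ H}`: if some nonempty open set is fixed pointwise by `β_g`,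
then `g = e`. -/
theorem stmt_10 {N H : Type*} [Group N] [Group H] (φ : H →* MulAut N)
    (M : Subgroup N) (hM : M ≠ ⊥)
    (hnormal : ∀ a : H, (M.map (φ a).toMonoidHom).Normal)
    (hbase : ∀ a b : H, ∃ c : H,
      M.map (φ c).toMonoidHom ≤ M.map (φ a).toMonoidHom ⊓ M.map (φ b).toMonoidHom)
    (hsep : (⨅ a : H, M.map (φ a).toMonoidHom) = ⊥)
    (heff : ∀ a : H, a ≠ 1 → ∃ s ∈ M, φ a s ≠ s) :
    ∀ g : N ⋊[φ] H,
      (∃ O : Set N, O.Nonempty ∧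
        @IsOpen N (TopologicalSpace.generateFrom
          {s | ∃ (x : N) (a : H), s = x • ((M.map (φ a).toMonoidHom : Subgroup N) : Set N)}) O ∧
        ∀ y ∈ O, axb φ g y = y) → g = 1 := by
  rintro g ⟨O, ⟨y, hy⟩, hopen, hfix⟩
  obtain ⟨c, hc⟩ := key_coset φ M hbase hopen y hy
  -- y itself is fixed
  have hyfix : g.left * φ g.right y = y := hfix y hy
  -- φ g.right fixes M.map (φ c) pointwise
  have hmfix : ∀ m ∈ M.map (φ c).toMonoidHom, φ g.right m = m := by
    intro m hm
    have hmem : y * m ∈ O := hc ⟨m, hm, rfl⟩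
    have := hfix (y * m) hmem
    unfold axb at this
    rw [map_mul, ← mul_assoc, hyfix] at this
    exact mul_left_cancel this
  -- g.right = 1
  have ha : g.right = 1 := by
    by_contra hne
    obtain ⟨s, hs, hss⟩ := heff (c⁻¹ * g.right * c) (by
      intro h
      apply hne
      have : g.right = c * 1 * c⁻¹ := by
        rw [← h]; group
      simpa using this)
    apply hss
    have hfixs := hmfix (φ c s) ⟨s, hs, rfl⟩
    rw [map_mul, map_mul, MulAut.mul_apply, MulAut.mul_apply, hfixs, map_inv]
    exact MulAut.inv_apply_self N (φ c) s
  have hx : g.left = 1 := by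
    have := hyfix
    rw [ha] at this
    simpa using this
  ext
  · simp [hx]
  · simp [ha]
end

section
/- Let H be an abelian group and H⁺ = {a ∈ H : aMa⁻¹ ⊆ M} (in the setting G = N ⋊ H with 𝒰 = {aMa⁻¹ : a∈H} a filter base containing, for each h ∈ H, a member inside hMh⁻¹ ∩ M). Then H = H⁺·(H⁺)⁻¹, and the relation a ≤ b iff b ∈ aH⁺ directs H. -/
private lemma map_mul_aux {N H : Type*} [Group N] [CommGroup H] (φ : H →* MulAut N)
    (M : Subgroup N) (x y : H) :
    M.map (φ (x * y)).toMonoidHom = (M.map (φ y).toMonoidHom).map (φ x).toMonoidHom := by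
  rw [Subgroup.map_map]
  congr 1
  ext n
  simp [map_mul]

private lemma part1 {N H : Type*} [Group N] [CommGroup H] (φ : H →* MulAut N)
    (M : Subgroup N)
    (hbase : ∀ h : H, ∃ a : H,
      M.map (φ a).toMonoidHom ≤ M.map (φ h).toMonoidHom ⊓ M) :
    ∀ h : H, ∃ a b : H,
      M.map (φ a).toMonoidHom ≤ M ∧ M.map (φ b).toMonoidHom ≤ M ∧ h = a * b⁻¹ := by
  intro h
  obtain ⟨a, ha⟩ := hbase h
  refine ⟨a, h⁻¹ * a, (ha.trans inf_le_right), ?_, by group⟩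
  have h1 : M.map (φ a).toMonoidHom ≤ M.map (φ h).toMonoidHom := ha.trans inf_le_left
  have h2 := Subgroup.map_mono (f := (φ h⁻¹).toMonoidHom) h1
  rw [← map_mul_aux, ← map_mul_aux, inv_mul_cancel] at h2
  have h3 : M.map (φ (1:H)).toMonoidHom = M := by ext x; simp
  rwa [h3] at h2

/-- For `H` abelian and `H⁺ = {a : aMa⁻¹ ⊆ M}`, if the family
`𝒰 = {aMa⁻¹ : a ∈ H}` is a filter base containing, for each `h ∈ H`, a member
inside `hMh⁻¹ ∩ M`, then `H = H⁺·(H⁺)⁻¹` and `a ≤ b ⟺ b ∈ aH⁺` directs `H`. -/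
theorem stmt_11 {N H : Type*} [Group N] [CommGroup H] (φ : H →* MulAut N)
    (M : Subgroup N)
    (hbase : ∀ h : H, ∃ a : H,
      M.map (φ a).toMonoidHom ≤ M.map (φ h).toMonoidHom ⊓ M) :
    (∀ h : H, ∃ a b : H,
      M.map (φ a).toMonoidHom ≤ M ∧ M.map (φ b).toMonoidHom ≤ M ∧
        h = a * b⁻¹) ∧
      (∀ h k : H, ∃ l : H,
        (∃ c : H, M.map (φ c).toMonoidHom ≤ M ∧ l = h * c) ∧
          (∃ c : H, M.map (φ c).toMonoidHom ≤ M ∧ l = k * c)) := by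
  refine ⟨part1 φ M hbase, ?_⟩
  intro h k
  obtain ⟨a, b, ha, hb, hab⟩ := part1 φ M hbase (k⁻¹ * h)
  refine ⟨h * b, ⟨b, hb, rfl⟩, ⟨a, ha, ?_⟩⟩
  have : k⁻¹ * h = a * b⁻¹ := hab
  have : h = k * a * b⁻¹ := by rw [mul_assoc, ← this]; group
  rw [this]; group
end

section
/- Let K = ℚ(θ) be an algebraic number field of degree n, where θ is an algebraic integer with minimal polynomial p(x) = α₀ + α₁x + ··· + α_{n-1}x^{n-1} - x^n with all α_i ∈ ℤ. Let M = ℤ[θ] and define the ℚ-linear map φ : K → ℚ by φ(a₀ + a₁θ + ··· + a_{n-1}θ^{n-1}) = a_{n-1}. Then for x ∈ K: x ∈ M if and only if φ(xy) ∈ ℤ for all y ∈ M. -/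
/-!
By Gauss's lemma the minimal polynomial of `θ` over `ℤ` is also its minimal polynomial over `ℚ`,
so it is monic of degree `n`, and dividing by it shows that `ℤ[θ]` is exactly the lattice of
elements with integer coordinates in the basis `1, θ, …, θ ^ (n - 1)`. This gives the forward
direction. Conversely, write `φ` for the last
coordinate. Then `φ (x * θ ^ (n - 1 - j)) = x_j + ∑_{i > j} x_i φ (θ ^ (i + n - 1 - j))`, since
`φ (θ ^ m)` is `0` for `m < n - 1` and `1` for `m = n - 1`: the matrix `(φ (θ ^ (i + k)))` is
unitriangular up to reversing rows. So the coordinates `x_{n-1}, x_{n-2}, …, x_0` are integers,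
one after the other.
-/

open Module

section PowerBasisCoordinates

variable {F K : Type*} [CommRing F] [CommRing K] [Algebra F K] {n : ℕ}
  {θ : K} {b : Basis (Fin n) F K}

theorem Module.Basis.repr_mul_pow_apply (hb : ∀ i : Fin n, b i = θ ^ (i : ℕ))
    (x : K) (k : ℕ) (j : Fin n) :
    b.repr (x * θ ^ k) j = ∑ i, b.repr x i * b.repr (θ ^ ((i : ℕ) + k)) j := by
  conv_lhs => rw [← b.sum_repr x, Finset.sum_mul]
  simp only [map_sum, Finsupp.finsetSum_apply, smul_mul_assoc, map_smul, Finsupp.smul_apply,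
    smul_eq_mul, hb, pow_add]

theorem Module.Basis.repr_pow_of_lt (hb : ∀ i : Fin n, b i = θ ^ (i : ℕ))
    {m : ℕ} (hm : m < n) (j : Fin n) :
    b.repr (θ ^ m) j = if m = j then 1 else 0 := by
  rw [show θ ^ m = b ⟨m, hm⟩ from (hb ⟨m, hm⟩).symm, b.repr_self_apply]
  exact if_congr Fin.ext_iff rfl rfl

theorem Module.Basis.repr_mem_of_forall_repr_mul_pow_last_mem
    (hb : ∀ i : Fin n, b i = θ ^ (i : ℕ)) (hn : 0 < n) (S : Subring F)
    (hpow : ∀ (m : ℕ) (j : Fin n), b.repr (θ ^ m) j ∈ S) (x : K)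
    (hx : ∀ k : ℕ, b.repr (x * θ ^ k) ⟨n - 1, Nat.sub_one_lt_of_lt hn⟩ ∈ S) (j : Fin n) :
    b.repr x j ∈ S := by
  induction j using WellFoundedGT.induction with
  | ind j IH =>
    set last : Fin n := ⟨n - 1, Nat.sub_one_lt_of_lt hn⟩
    set k := n - 1 - (j : ℕ)
    have hterm (i : Fin n) :
        b.repr x i * b.repr (θ ^ ((i : ℕ) + k)) last - (if i = j then b.repr x j else 0) ∈ S := by
      rcases lt_trichotomy i j with hij | rfl | hij
      · rw [b.repr_pow_of_lt hb (by omega), if_neg (by simp [last]; omega), if_neg hij.ne]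
        simp
      · rw [b.repr_pow_of_lt hb (by omega), if_pos (by simp [last]; omega), if_pos rfl]
        simp
      · rw [if_neg hij.ne', sub_zero]
        exact S.mul_mem (IH i hij) (hpow _ _)
    have hxj : b.repr x j = b.repr (x * θ ^ k) last -
        ∑ i, (b.repr x i * b.repr (θ ^ ((i : ℕ) + k)) last - if i = j then b.repr x j else 0) := by
      rw [b.repr_mul_pow_apply hb, Finset.sum_sub_distrib, Finset.sum_ite_eq']
      simp
    rw [hxj]
    exact S.sub_mem (hx k) (S.sum_mem fun i _ => hterm i)

end PowerBasisCoordinates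

section IntegralGenerator

variable {R F K : Type*} [CommRing R] [IsDomain R] [IsIntegrallyClosed R] [Field F]
  [Algebra R F] [IsFractionRing R F] [CommRing K] [IsDomain K] [Algebra R K] [Algebra F K]
  [IsScalarTower R F K]

theorem Module.Basis.span_range_eq_adjoin_of_isIntegral {n : ℕ} {θ : K} (hθ : IsIntegral R θ)
    (b : Basis (Fin n) F K) (hb : ∀ i : Fin n, b i = θ ^ (i : ℕ)) :
    Submodule.span R (Set.range b) = Subalgebra.toSubmodule (Algebra.adjoin R {θ}) := by
  refine le_antisymm (Submodule.span_le.2 ?_) fun y hy => ?_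
  · rintro _ ⟨i, rfl⟩
    rw [hb]
    exact pow_mem (Algebra.self_mem_adjoin_singleton R θ) _
  · let pb : PowerBasis F K := ⟨θ, n, b, hb⟩
    have hdeg : (minpoly R θ).natDegree = n := by
      rw [← (minpoly.monic hθ).natDegree_map (algebraMap R F),
        ← minpoly.isIntegrallyClosed_eq_field_fractions' F hθ]
      exact pb.natDegree_minpoly
    have hy' := hθ.mem_span_pow (y := y)
      (by simpa [Algebra.adjoin_singleton_eq_range_aeval, eq_comm] using hy)
    rw [hdeg] at hy'
    simpa [← hb] using hy'

end IntegralGenerator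

/-- For a number field `K = ℚ(θ)` of degree `n` with `θ` an algebraic integer,
with `M = ℤ[θ]` and `φ : K → ℚ` the coefficient of `θ^{n-1}`, one has
`x ∈ M ⟺ φ(xy) ∈ ℤ` for all `y ∈ M`. -/
theorem stmt_14 {K : Type*} [Field K] [Algebra ℚ K] {n : ℕ} (hn : 0 < n)
    (θ : K) (hint : IsIntegral ℤ θ)
    (b : Module.Basis (Fin n) ℚ K) (hb : ∀ i : Fin n, b i = θ ^ (i : ℕ)) :
    ∀ x : K, x ∈ Algebra.adjoin ℤ ({θ} : Set K) ↔
      ∀ y ∈ Algebra.adjoin ℤ ({θ} : Set K),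
        ∃ k : ℤ, b.repr (x * y) ⟨n - 1, by omega⟩ = (k : ℚ) := by
  have hM (z : K) : z ∈ Algebra.adjoin ℤ {θ} ↔ ∀ i, b.repr z i ∈ (algebraMap ℤ ℚ).range := by
    rw [← Subalgebra.mem_toSubmodule, ← b.span_range_eq_adjoin_of_isIntegral hint hb,
      b.mem_span_iff_repr_mem ℤ]
    rfl
  have hpow (m : ℕ) : θ ^ m ∈ Algebra.adjoin ℤ {θ} :=
    pow_mem (Algebra.self_mem_adjoin_singleton ℤ θ) m
  intro x
  constructor
  · intro hx y hy
    obtain ⟨k, hk⟩ := (hM _).1 (mul_mem hx hy) ⟨n - 1, by omega⟩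
    exact ⟨k, by simp [← hk]⟩
  · intro H
    refine (hM x).2 (b.repr_mem_of_forall_repr_mul_pow_last_mem hb hn _
      (fun m => (hM _).1 (hpow m)) x fun k => ?_)
    obtain ⟨c, hc⟩ := H _ (hpow k)
    exact ⟨c, by simp [hc]⟩
end

section
/- In the lamplighter setting (H abelian with Ore subsemigroup H⁺ such that H⁺ \ cH⁺ is finite for each c ∈ H⁺; F finite; N = ⊕_H F; M = ⊕_{H⁺} F; H acting by shift), for every c ∈ H⁺ the quotient group M/(c·M) is isomorphic to the group {f ∈ N : supp(f) ⊆ H⁺ \ cH⁺} ≅ ⊕_{H⁺ \ cH⁺} F, and in particular is finite. -/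
open Pointwise Function

/-- The subgroup of `∏_H F` of finitely supported functions with support in `S`. -/
def suppSubgroup (H : Type*) {F : Type*} [Group F] (S : Set H) :
    Subgroup (H → F) where
  carrier := {f | (mulSupport f).Finite ∧ mulSupport f ⊆ S}
  one_mem' := by simp
  mul_mem' := by
    intro f g hf hg
    exact ⟨((hf.1.union hg.1).subset (mulSupport_mul f g)),
      (mulSupport_mul f g).trans (Set.union_subset hf.2 hg.2)⟩
  inv_mem' := by
    intro f hf
    simpa [mulSupport_inv] using hf

/-- Lamplighter setting: for `c ∈ H⁺`, the quotient `M/(c·M)` is isomorphic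
(via restriction of functions, expressed as a surjection with kernel `c·M`) to
`⊕_{H⁺ \ cH⁺} F`; in particular it is finite. -/
theorem stmt_17 {H : Type*} [CommGroup H] [Infinite H] (Hp : Submonoid H)
    (hOre1 : ∀ a : H, a ∈ Hp → a⁻¹ ∈ Hp → a = 1)
    (hOre2 : ∀ h : H, ∃ a b : H, a ∈ Hp ∧ b ∈ Hp ∧ h = a⁻¹ * b)
    (hfin : ∀ c ∈ Hp, ((Hp : Set H) \ (c • (Hp : Set H))).Finite)
    {F : Type*} [Group F] [Finite F] (c : H) (hc : c ∈ Hp) :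
    let M' := suppSubgroup H (F := F) (Hp : Set H)
    let cM := suppSubgroup H (F := F) (c • (Hp : Set H))
    let T := suppSubgroup H (F := F) ((Hp : Set H) \ (c • (Hp : Set H)))
    ∃ r : ↥M' →* ↥T,
      (∀ (f : ↥M') (x : H), x ∈ (Hp : Set H) \ (c • (Hp : Set H)) →
        (r f : H → F) x = (f : H → F) x) ∧
      Function.Surjective r ∧ r.ker = cM.subgroupOf M' ∧
      Finite ↥T ∧ Finite (↥M' ⧸ cM.subgroupOf M') := by
  intro M' cM T
  classical
  set S : Set H := (Hp : Set H) \ (c • (Hp : Set H)) with hS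
  have hSfin : S.Finite := hfin c hc
  -- the restriction homomorphism
  have memT : ∀ f : ↥M', Set.mulIndicator S (f : H → F) ∈ T := by
    intro f
    refine ⟨?_, ?_⟩
    · exact hSfin.subset (by
        rw [Set.mulSupport_mulIndicator]; exact Set.inter_subset_left)
    · rw [Set.mulSupport_mulIndicator]; exact Set.inter_subset_left
  let r : ↥M' →* ↥T :=
    { toFun := fun f => ⟨Set.mulIndicator S (f : H → F), memT f⟩
      map_one' := by
        ext x
        simp [Set.mulIndicator]
      map_mul' := by
        intro f g
        ext x
        by_cases hx : x ∈ S <;>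
          simp [Set.mulIndicator_apply, hx] }
  have hker : r.ker = cM.subgroupOf M' := by
    ext f
    simp only [MonoidHom.mem_ker, Subgroup.mem_subgroupOf]
    constructor
    · intro h
      have h' : Set.mulIndicator S (f : H → F) = 1 := congrArg Subtype.val h
      refine ⟨f.2.1, ?_⟩
      intro x hx
      have hxHp : x ∈ (Hp : Set H) := f.2.2 hx
      by_contra hxc
      have hxS : x ∈ S := ⟨hxHp, hxc⟩
      have := congrFun h' x
      rw [Set.mulIndicator_of_mem hxS] at this
      exact hx this
    · intro h
      ext x
      show Set.mulIndicator S (f : H → F) x = (1 : H → F) x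
      by_cases hx : x ∈ S
      · rw [Set.mulIndicator_of_mem hx]
        by_contra hne
        exact hx.2 (h.2 hne)
      · rw [Set.mulIndicator_of_notMem hx]; rfl
  haveI hTfin : Finite ↥T := by
    haveI := hSfin.to_subtype
    refine Finite.of_injective (fun f : ↥T => fun x : S => (f : H → F) x) ?_
    intro f g hfg
    ext x
    by_cases hx : x ∈ S
    · exact congrFun hfg ⟨x, hx⟩
    · have h1 : (f : H → F) x = 1 := by
        by_contra h; exact hx (f.2.2 h)
      have h2 : (g : H → F) x = 1 := by
        by_contra h; exact hx (g.2.2 h)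
      rw [h1, h2]
  refine ⟨r, ?_, ?_, hker, hTfin, ?_⟩
  · intro f x hx
    exact Set.mulIndicator_of_mem hx _
  · intro g
    have hgM : (g : H → F) ∈ M' := ⟨g.2.1, g.2.2.trans Set.diff_subset⟩
    refine ⟨⟨(g : H → F), hgM⟩, ?_⟩
    ext x
    show Set.mulIndicator S (g : H → F) x = (g : H → F) x
    by_cases hx : x ∈ S
    · exact Set.mulIndicator_of_mem hx _
    · rw [Set.mulIndicator_of_notMem hx]
      by_contra h
      exact hx (g.2.2 (Ne.symm h))
  · rw [← hker]
    exact Finite.of_equiv _ (QuotientGroup.quotientKerEquivRange r).toEquiv.symm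
end
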